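/- arXiv:2102.03599 — 2 statements merged into one kernel-verified Lean document; each statement's English description precedes it below -/
import Mathlib

section
/- Let g be a polynomial and C₁ ∈ ℂ, and set Ψ(x) = g(x)² − 4C₁²Φ(x) where Φ(x) = (x+j₁)(x+j₂)(x+j₃). Fix x, W ∈ ℂ such that (x,W) satisfies the equation of curve K: W⁴ − 2g(x)W² + 4C₁²Φ(x) = 0. Let w₁, w₂ be the two roots of the quadratic r(w) = w² − √2·W·w + W² − g(x) = 0. Then both (x,w₁) and (x,w₂) satisfy the equation of curve C: wᵢ⁴ − 2g(x)wᵢ² + g(x)² − 4C₁²Φ(x) = 0, for i = 1,2. -/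
/-- If `(x, W)` lies on the curve `K : W⁴ − 2g(x)W² + 4C₁²Φ(x) = 0` and
`w₁, w₂` are the roots of `r(w) = w² − √2·W·w + W² − g(x)`, then both
`(x, w₁)` and `(x, w₂)` lie on the curve
`C : w⁴ − 2g(x)w² + g(x)² − 4C₁²Φ(x) = 0`. -/
theorem stmt_1 (K₁ Hp Hs C₁ j₁ j₂ j₃ x W w₁ w₂ g Φ : ℂ)
    (hg : g = K₁ * x ^ 2 + Hp * x + Hs)
    (hΦ : Φ = (x + j₁) * (x + j₂) * (x + j₃))
    (hK : W ^ 4 - 2 * g * W ^ 2 + 4 * C₁ ^ 2 * Φ = 0)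
    (hw₁ : w₁ ^ 2 - (Real.sqrt 2 : ℂ) * W * w₁ + (W ^ 2 - g) = 0)
    (hw₂ : w₂ ^ 2 - (Real.sqrt 2 : ℂ) * W * w₂ + (W ^ 2 - g) = 0) :
    w₁ ^ 4 - 2 * g * w₁ ^ 2 + g ^ 2 - 4 * C₁ ^ 2 * Φ = 0 ∧
    w₂ ^ 4 - 2 * g * w₂ ^ 2 + g ^ 2 - 4 * C₁ ^ 2 * Φ = 0 := by
  have h2 : ((Real.sqrt 2 : ℂ)) ^ 2 = 2 := by
    rw [show ((Real.sqrt 2 : ℝ) : ℂ) ^ 2 = ((Real.sqrt 2 ^ 2 : ℝ) : ℂ) by push_cast; ring,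
      Real.sq_sqrt (by norm_num)]
    norm_num
  constructor
  · linear_combination (w₁ ^ 2 + (Real.sqrt 2 : ℂ) * W * w₁ + W ^ 2 - g) * hw₁ - hK +
      W ^ 2 * w₁ ^ 2 * h2
  · linear_combination (w₂ ^ 2 + (Real.sqrt 2 : ℂ) * W * w₂ + W ^ 2 - g) * hw₂ - hK +
      W ^ 2 * w₂ ^ 2 * h2
end

section
/- With the parameterization of the previous statement (Y² = 4∏(Z+j_α), v_α = (Z²+2j_αZ+j_α(j_β+j_γ)−j_βj_γ)/Y, x as given), the product v₁v₂v₃ equals a rational function of Z and Y of the form p₆(Z)/Y³ for an explicit polynomial p₆ of degree 6 in Z; consequently, substituting into w² = g(x) + 2C₁v₁v₂v₃ and clearing denominators by G = wY², the curve 𝒟 is given by G² = p₇(Z) + 2C₁·Y·p₆(Z) for some polynomial p₇ in Z (with Y² = 4(Z+j₁)(Z+j₂)(Z+j₃)). -/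
open Polynomial

/-!
Put `v_α = a_α(Z)/Y` and `x = n(Z)/Y²`. Then `v₁v₂v₃ = a₁a₂a₃(Z)/Y³`, and multiplying
`w² = K₁x² + H_p x + H_s + 2C₁v₁v₂v₃` by `Y⁴` turns every even power of `Y` into a polynomial in `Z`
through `Y² = 4∏(Z + j_α)`, leaving the single odd term `2C₁·Y·a₁a₂a₃(Z)`.
-/

section Parameterization

variable {R : Type*} [CommRing R]

/-- The numerator of `v_α` when `(a, b, c) = (j_α, j_β, j_γ)`. -/
noncomputable def vNumerator (a b c : R) : R[X] :=
  X ^ 2 + C (2 * a) * X + C (a * (b + c) - b * c)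

noncomputable def xNumerator (j₁ j₂ j₃ : R) : R[X] :=
  (X ^ 2 - C (j₁ * j₂ + j₂ * j₃ + j₃ * j₁)) ^ 2 - C (4 * j₁ * j₂ * j₃ * (j₁ + j₂ + j₃))

noncomputable def weierstrassCubic (j₁ j₂ j₃ : R) : R[X] :=
  C 4 * (X + C j₁) * (X + C j₂) * (X + C j₃)

noncomputable def p₆ (j₁ j₂ j₃ : R) : R[X] :=
  vNumerator j₁ j₂ j₃ * vNumerator j₂ j₃ j₁ * vNumerator j₃ j₁ j₂

noncomputable def p₇ (K Hp Hs j₁ j₂ j₃ : R) : R[X] :=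
  C K * xNumerator j₁ j₂ j₃ ^ 2 + C Hp * xNumerator j₁ j₂ j₃ * weierstrassCubic j₁ j₂ j₃ +
    C Hs * weierstrassCubic j₁ j₂ j₃ ^ 2

theorem eval_vNumerator (a b c Z : R) :
    (vNumerator a b c).eval Z = Z ^ 2 + 2 * a * Z + a * (b + c) - b * c := by
  simp only [vNumerator, eval_add, eval_pow, eval_mul, eval_C, eval_X]
  ring

theorem eval_xNumerator (j₁ j₂ j₃ Z : R) :
    (xNumerator j₁ j₂ j₃).eval Z =
      (Z ^ 2 - j₁ * j₂ - j₂ * j₃ - j₃ * j₁) ^ 2 - 4 * j₁ * j₂ * j₃ * (j₁ + j₂ + j₃) := by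
  simp only [xNumerator, eval_sub, eval_pow, eval_C, eval_X]
  ring

theorem eval_weierstrassCubic (j₁ j₂ j₃ Z : R) :
    (weierstrassCubic j₁ j₂ j₃).eval Z = 4 * (Z + j₁) * (Z + j₂) * (Z + j₃) := by
  simp only [weierstrassCubic, eval_mul, eval_add, eval_C, eval_X]

theorem eval_p₇ (K Hp Hs j₁ j₂ j₃ Z : R) :
    (p₇ K Hp Hs j₁ j₂ j₃).eval Z =
      K * (xNumerator j₁ j₂ j₃).eval Z ^ 2 +
        Hp * (xNumerator j₁ j₂ j₃).eval Z * (weierstrassCubic j₁ j₂ j₃).eval Z +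
        Hs * (weierstrassCubic j₁ j₂ j₃).eval Z ^ 2 := by
  simp only [p₇, eval_add, eval_mul, eval_pow, eval_C]

theorem vNumerator_monic (a b c : R) : (vNumerator a b c).Monic := by
  unfold vNumerator
  monicity!

theorem natDegree_vNumerator [Nontrivial R] (a b c : R) : (vNumerator a b c).natDegree = 2 := by
  unfold vNumerator
  compute_degree!

theorem natDegree_p₆ [Nontrivial R] (j₁ j₂ j₃ : R) : (p₆ j₁ j₂ j₃).natDegree = 6 := by
  rw [p₆, (vNumerator_monic _ _ _ |>.mul (vNumerator_monic _ _ _)).natDegree_mul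
    (vNumerator_monic _ _ _), (vNumerator_monic _ _ _).natDegree_mul (vNumerator_monic _ _ _)]
  simp only [natDegree_vNumerator]

theorem sq_mul_sq_eq_of_sq_eq {K H S C₁ x u w Y n q p : R} (hx : x * Y ^ 2 = n) (hY : Y ^ 2 = q)
    (hu : u * Y ^ 3 = p) (hw : w ^ 2 = K * x ^ 2 + H * x + S + 2 * C₁ * u) :
    (w * Y ^ 2) ^ 2 = K * n ^ 2 + H * n * q + S * q ^ 2 + 2 * C₁ * Y * p := by
  rw [← hx, ← hY, ← hu]
  linear_combination Y ^ 4 * hw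

end Parameterization

theorem stmt_5_general (K₁ Hp Hs C₁ j₁ j₂ j₃ : ℂ) :
    ∃ p₆ p₇ : Polynomial ℂ, p₆.natDegree = 6 ∧
      ∀ Z Y v₁ v₂ v₃ x : ℂ,
        Y ^ 2 = 4 * (Z + j₁) * (Z + j₂) * (Z + j₃) → Y ≠ 0 →
        v₁ = (Z ^ 2 + 2 * j₁ * Z + j₁ * (j₂ + j₃) - j₂ * j₃) / Y →
        v₂ = (Z ^ 2 + 2 * j₂ * Z + j₂ * (j₃ + j₁) - j₃ * j₁) / Y →
        v₃ = (Z ^ 2 + 2 * j₃ * Z + j₃ * (j₁ + j₂) - j₁ * j₂) / Y →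
        x = ((Z ^ 2 - j₁ * j₂ - j₂ * j₃ - j₃ * j₁) ^ 2 -
            4 * j₁ * j₂ * j₃ * (j₁ + j₂ + j₃)) / Y ^ 2 →
        (v₁ * v₂ * v₃ = p₆.eval Z / Y ^ 3 ∧
          ∀ w : ℂ,
            w ^ 2 = (K₁ * x ^ 2 + Hp * x + Hs) + 2 * C₁ * (v₁ * v₂ * v₃) →
            (w * Y ^ 2) ^ 2 = p₇.eval Z + 2 * C₁ * Y * p₆.eval Z) := by
  refine ⟨p₆ j₁ j₂ j₃, p₇ K₁ Hp Hs j₁ j₂ j₃, natDegree_p₆ j₁ j₂ j₃, ?_⟩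
  intro Z Y v₁ v₂ v₃ x hY hY0 hv₁ hv₂ hv₃ hx
  have hv : v₁ * v₂ * v₃ = (p₆ j₁ j₂ j₃).eval Z / Y ^ 3 := by
    rw [p₆, eval_mul, eval_mul, eval_vNumerator, eval_vNumerator, eval_vNumerator, hv₁, hv₂, hv₃]
    ring
  refine ⟨hv, fun w hw => ?_⟩
  rw [eval_p₇]
  refine sq_mul_sq_eq_of_sq_eq ?_ (hY.trans (eval_weierstrassCubic j₁ j₂ j₃ Z).symm) ?_ hw
  · rw [hx, eval_xNumerator, div_mul_cancel₀ _ (pow_ne_zero 2 hY0)]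
  · rw [hv, div_mul_cancel₀ _ (pow_ne_zero 3 hY0)]

/-- With the elliptic parameterization of `v₁, v₂, v₃, x`, the product
`v₁v₂v₃` equals `p₆(Z)/Y³` for a polynomial `p₆` of degree `6`, and after
setting `G = wY²`, the curve `𝒟 : w² = g(x) + 2C₁v₁v₂v₃` rewrites as
`G² = p₇(Z) + 2C₁·Y·p₆(Z)` for some polynomial `p₇`. -/
theorem stmt_5 (K₁ Hp Hs C₁ j₁ j₂ j₃ : ℂ)
    (h12 : j₁ ≠ j₂) (h13 : j₁ ≠ j₃) (h23 : j₂ ≠ j₃) :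
    ∃ p₆ p₇ : Polynomial ℂ, p₆.natDegree = 6 ∧
      ∀ Z Y v₁ v₂ v₃ x : ℂ,
        Y ^ 2 = 4 * (Z + j₁) * (Z + j₂) * (Z + j₃) → Y ≠ 0 →
        v₁ = (Z ^ 2 + 2 * j₁ * Z + j₁ * (j₂ + j₃) - j₂ * j₃) / Y →
        v₂ = (Z ^ 2 + 2 * j₂ * Z + j₂ * (j₃ + j₁) - j₃ * j₁) / Y →
        v₃ = (Z ^ 2 + 2 * j₃ * Z + j₃ * (j₁ + j₂) - j₁ * j₂) / Y →
        x = ((Z ^ 2 - j₁ * j₂ - j₂ * j₃ - j₃ * j₁) ^ 2 -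
            4 * j₁ * j₂ * j₃ * (j₁ + j₂ + j₃)) / Y ^ 2 →
        (v₁ * v₂ * v₃ = p₆.eval Z / Y ^ 3 ∧
          ∀ w : ℂ,
            w ^ 2 = (K₁ * x ^ 2 + Hp * x + Hs) + 2 * C₁ * (v₁ * v₂ * v₃) →
            (w * Y ^ 2) ^ 2 = p₇.eval Z + 2 * C₁ * Y * p₆.eval Z) :=
  stmt_5_general K₁ Hp Hs C₁ j₁ j₂ j₃
end
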